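/- arXiv:2211.01114 — 6 statements merged into one kernel-verified Lean document; each statement's English description precedes it below -/
import Mathlib

section
/- Let n ≥ 0 be an integer and let p be a prime with p = 24n − 1 or p = 24n + 7. Let c_m = ((−1/24)_m (7/24)_m) / ((3/4)_m · m!) be the m-th coefficient of the hypergeometric series ₂F₁(−1/24, 7/24; 3/4; x). Then for all m with n < m < 6n, the rational number c_m is p-integral and c_m ≡ 0 (mod p). -/
/-- Pochhammer symbol `(x)_m = x(x+1)⋯(x+m−1)`. -/
def poch (x : ℚ) : ℕ → ℚ
  | 0 => 1
  | m + 1 => poch x m * (x + m)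

open Finset in
lemma poch_eq (a b : ℤ) (hb : (b:ℚ) ≠ 0) (m : ℕ) :
    poch ((a:ℚ)/(b:ℚ)) m = (∏ k ∈ range m, ((a + b*k : ℤ) : ℚ)) / (b:ℚ)^m := by
  induction m with
  | zero => simp [poch]
  | succ m ih =>
      rw [poch, ih, prod_range_succ, pow_succ]
      have hx : ((a:ℚ)/b + m) = ((a + b*(m:ℤ) : ℤ):ℚ) / b := by push_cast; field_simp
      rw [hx, div_mul_div_comm]

theorem stmt_1 (n p : ℕ) [Fact p.Prime]
    (hpn : p = 24 * n - 1 ∨ p = 24 * n + 7)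
    (c : ℕ → ℚ)
    (hc : ∀ m, c m = poch (-1/24) m * poch (7/24) m / (poch (3/4) m * m.factorial)) :
    ∀ m, n < m → m < 6 * n → ¬ (p ∣ (c m).den) ∧ ((c m : ZMod p) = 0) := by
  intro m hnm hm6
  have hp : p.Prime := Fact.out
  have hn1 : 1 ≤ n := by omega
  have hpZ : Prime (p : ℤ) := Nat.prime_iff_prime_int.mp hp
  set A1 : ℤ := ∏ k ∈ Finset.range m, ((-1 : ℤ) + 24*k) with hA1
  set A2 : ℤ := ∏ k ∈ Finset.range m, ((7 : ℤ) + 24*k) with hA2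
  set D : ℤ := ∏ k ∈ Finset.range m, ((3 : ℤ) + 4*k) with hD
  set B : ℤ := 144^m * D * m.factorial with hB
  have hDpos : 0 < D := Finset.prod_pos (fun k _ => by positivity)
  have hBpos : 0 < B := by positivity
  have hBQ : ((B : ℤ) : ℚ) ≠ 0 := by exact_mod_cast hBpos.ne'
  -- the key representation c m = (A1*A2)/B
  have e1 : (-1/24 : ℚ) = ((-1 : ℤ):ℚ)/((24:ℤ):ℚ) := by norm_num
  have e2 : (7/24 : ℚ) = ((7 : ℤ):ℚ)/((24:ℤ):ℚ) := by norm_num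
  have e3 : (3/4 : ℚ) = ((3 : ℤ):ℚ)/((4:ℤ):ℚ) := by norm_num
  have hc' : c m = ((A1 * A2 : ℤ) : ℚ) / ((B : ℤ) : ℚ) := by
    rw [hc m, e1, e2, e3, poch_eq (-1) 24 (by norm_num), poch_eq 7 24 (by norm_num),
      poch_eq 3 4 (by norm_num)]
    have h24 : ((24:ℤ):ℚ)^m ≠ 0 := by positivity
    have h4 : ((4:ℤ):ℚ)^m ≠ 0 := by positivity
    have hDQ : ((D:ℤ):ℚ) ≠ 0 := by exact_mod_cast hDpos.ne'
    have hfQ : ((m.factorial : ℕ) : ℚ) ≠ 0 := by positivity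
    rw [hB, hA1, hA2, hD]
    push_cast
    field_simp
    rw [show ((24:ℚ)^m)^2 = 4^m*144^m from by rw [sq, ← mul_pow, ← mul_pow]; norm_num]
    ring
  -- p does not divide B
  have hpB : ¬ (p:ℤ) ∣ B := by
    intro h
    rcases (hpZ.dvd_mul.mp h) with h | hfac
    · rcases (hpZ.dvd_mul.mp h) with h144 | hDdvd
      · have h144' : (p:ℤ) ∣ 144 := hpZ.dvd_of_dvd_pow h144
        have : p ∣ 144 := by exact_mod_cast h144'
        have h169 : p ∣ 16 * 9 := by norm_num at this ⊢; exact this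
        rcases (Nat.Prime.dvd_mul hp).mp h169 with h16 | h9
        · have := hp.dvd_of_dvd_pow (show p ∣ 2^4 by norm_num at h16 ⊢; exact h16)
          have := Nat.le_of_dvd (by norm_num) this
          omega
        · have := hp.dvd_of_dvd_pow (show p ∣ 3^2 by norm_num at h9 ⊢; exact h9)
          have := Nat.le_of_dvd (by norm_num) this
          omega
      · obtain ⟨k, hk, hdk⟩ := hpZ.exists_mem_finset_dvd hDdvd
        rw [Finset.mem_range] at hk
        have hdk' : (p:ℤ) ∣ ((4*k+3 : ℕ) : ℤ) := by
          rw [show ((4*k+3 : ℕ) : ℤ) = 3 + 4*(k:ℤ) by push_cast; ring]; exact hdk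
        have : p ∣ 4*k+3 := by exact_mod_cast hdk'
        have := Nat.le_of_dvd (by omega) this
        omega
    · have : (p:ℤ) ∣ ((m.factorial : ℕ) : ℤ) := hfac
      have hpf : p ∣ m.factorial := by exact_mod_cast this
      have := (Nat.Prime.dvd_factorial hp).mp hpf
      omega
  -- p divides A1 * A2
  have hpA : (p:ℤ) ∣ A1 * A2 := by
    rcases hpn with h | h
    · refine Dvd.dvd.mul_right ?_ A2
      have : (p:ℤ) ∣ ((-1 : ℤ) + 24*n) := by
        have : (p:ℤ) = (-1 : ℤ) + 24*n := by omega
        rw [this]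
      exact dvd_trans this (Finset.dvd_prod_of_mem _ (Finset.mem_range.mpr hnm))
    · refine Dvd.dvd.mul_left ?_ A1
      have : (p:ℤ) ∣ ((7 : ℤ) + 24*n) := by
        have : (p:ℤ) = (7 : ℤ) + 24*n := by push_cast [h]; ring
        rw [this]
      exact dvd_trans this (Finset.dvd_prod_of_mem _ (Finset.mem_range.mpr hnm))
  -- cross multiplication
  have hden : (((c m).den : ℤ) : ℚ) ≠ 0 := by
    have := (c m).den_nz
    exact_mod_cast this
  have h2 : (((c m).num : ℤ) : ℚ) / (((c m).den : ℕ) : ℚ) = ((A1*A2:ℤ):ℚ)/((B:ℤ):ℚ) := by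
    rw [Rat.num_div_den, hc']
  rw [div_eq_div_iff (by exact_mod_cast hden) hBQ] at h2
  have key : (c m).num * B = (A1*A2) * ((c m).den : ℤ) := by exact_mod_cast h2
  have hpnum : (p:ℤ) ∣ (c m).num := by
    have h3 : (p:ℤ) ∣ (c m).num * B := by rw [key]; exact hpA.mul_right _
    exact (hpZ.dvd_mul.mp h3).resolve_right hpB
  constructor
  · -- denominator
    intro hd
    have hdvd : ((c m).den : ℤ) ∣ B := by
      have := Rat.den_dvd (A1*A2) B
      rw [Rat.divInt_eq_div, ← hc'] at this
      exact this
    exact hpB (dvd_trans (Int.natCast_dvd_natCast.mpr hd) hdvd)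
  · rw [Rat.cast_def]
    have : (((c m).num : ℤ) : ZMod p) = 0 := by
      rw [ZMod.intCast_zmod_eq_zero_iff_dvd]
      exact_mod_cast hpnum
    rw [this, zero_div]
end

section
/- Let n ≥ 0 be an integer and let p be a prime with p = 24n + 11 or p = 24n + 19. Let c_m = ((11/24)_m (19/24)_m) / ((3/4)_m · m!). Then for all m with n < m < 6n, c_m is p-integral and c_m ≡ 0 (mod p). -/
lemma poch_eq_prod (x : ℚ) (m : ℕ) : poch x m = ∏ k ∈ Finset.range m, (x + k) := by
  induction m with
  | zero => simp [poch]
  | succ m ih => rw [poch, ih, Finset.prod_range_succ]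

lemma poch_frac (a b : ℕ) (hb : (b:ℚ) ≠ 0) (m : ℕ) :
    poch ((a : ℚ)/b) m = ((∏ k ∈ Finset.range m, (a + b*k : ℕ) : ℕ) : ℚ) / (b:ℚ)^m := by
  rw [poch_eq_prod]
  have h : ∀ k ∈ Finset.range m, ((a:ℚ)/b + k) = ((a + b*k : ℕ):ℚ)/b := by
    intro k _
    push_cast
    field_simp
  rw [Finset.prod_congr rfl h, Finset.prod_div_distrib, Finset.prod_const,
    Finset.card_range, Nat.cast_prod]

theorem stmt_2 (n p : ℕ) [Fact p.Prime]
    (hpn : p = 24 * n + 11 ∨ p = 24 * n + 19)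
    (c : ℕ → ℚ)
    (hc : ∀ m, c m = poch (11/24) m * poch (19/24) m / (poch (3/4) m * m.factorial)) :
    ∀ m, n < m → m < 6 * n → ¬ (p ∣ (c m).den) ∧ ((c m : ZMod p) = 0) := by
  intro m hm1 hm2
  have hp := (Fact.out : p.Prime)
  have hn1 : 1 ≤ n := by omega
  set A : ℕ := ∏ k ∈ Finset.range m, (11 + 24*k) with hA
  set B : ℕ := ∏ k ∈ Finset.range m, (19 + 24*k) with hB
  set D : ℕ := ∏ k ∈ Finset.range m, (3 + 4*k) with hD
  have hDpos : 0 < D := Finset.prod_pos (fun k _ => by positivity)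
  have key : c m = ((A*B : ℕ) : ℚ) / ((144^m * D * m.factorial : ℕ) : ℚ) := by
    simp only [hA, hB, hD]
    rw [hc m]
    rw [show (11/24 : ℚ) = ((11:ℕ):ℚ)/((24:ℕ):ℚ) by norm_num,
        show (19/24 : ℚ) = ((19:ℕ):ℚ)/((24:ℕ):ℚ) by norm_num,
        show (3/4 : ℚ) = ((3:ℕ):ℚ)/((4:ℕ):ℚ) by norm_num]
    rw [poch_frac 11 24 (by norm_num), poch_frac 19 24 (by norm_num),
        poch_frac 3 4 (by norm_num)]
    have h144 : ((144:ℚ))^m = 24^m * 24^m / 4^m := by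
      rw [← mul_pow, ← div_pow]; norm_num
    have hDne : (D:ℚ) ≠ 0 := by positivity
    have hfne : ((m.factorial : ℕ):ℚ) ≠ 0 := by positivity
    push_cast
    rw [h144]
    field_simp
  have hnum : p ∣ A * B := by
    rcases hpn with h | h
    · refine Dvd.dvd.mul_right ?_ B
      have h11 : (11 + 24*n) ∣ A := Finset.dvd_prod_of_mem _ (Finset.mem_range.mpr hm1)
      have hp' : p = 11 + 24*n := by omega
      rw [hp']; exact h11
    · refine Dvd.dvd.mul_left ?_ A
      have h19 : (19 + 24*n) ∣ B := Finset.dvd_prod_of_mem _ (Finset.mem_range.mpr hm1)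
      have hp' : p = 19 + 24*n := by omega
      rw [hp']; exact h19
  have hden : ¬ p ∣ 144^m * D * m.factorial := by
    intro h
    rcases (Nat.Prime.dvd_mul hp).mp h with h' | h'
    · rcases (Nat.Prime.dvd_mul hp).mp h' with h'' | h''
      · have h144 : p ∣ 144 := hp.dvd_of_dvd_pow h''
        have : p ∣ 2^4 * 3^2 := by simpa using h144
        rcases (Nat.Prime.dvd_mul hp).mp this with h2 | h3
        · have := Nat.le_of_dvd (by norm_num) (hp.dvd_of_dvd_pow h2)
          omega
        · have := Nat.le_of_dvd (by norm_num) (hp.dvd_of_dvd_pow h3)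
          omega
      · obtain ⟨k, hk, hdvd⟩ := hp.prime.exists_mem_finset_dvd h''
        have hk' := Finset.mem_range.mp hk
        have := Nat.le_of_dvd (by positivity) hdvd
        omega
    · have := (Nat.Prime.dvd_factorial hp).mp h'
      omega
  constructor
  · intro hpd
    have hd := Rat.den_dvd ((A*B : ℕ) : ℤ) ((144^m * D * m.factorial : ℕ) : ℤ)
    rw [Rat.divInt_eq_div, Int.cast_natCast, Int.cast_natCast, ← key] at hd
    exact hden (Int.natCast_dvd_natCast.mp
      (dvd_trans (Int.natCast_dvd_natCast.mpr hpd) hd))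
  · have hdenN : ((144^m * D * m.factorial : ℕ) : ℚ) ≠ 0 := by positivity
    have hq : (c m) * ((144^m * D * m.factorial : ℕ) : ℚ) = ((A*B : ℕ) : ℚ) := by
      rw [key]; field_simp
    have hZ : (c m).num * ((144^m * D * m.factorial : ℕ) : ℤ)
        = ((A*B : ℕ) : ℤ) * ((c m).den : ℤ) := by
      have h1 := hq
      rw [← Rat.num_div_den (c m)] at h1
      have hden0 : ((c m).den : ℚ) ≠ 0 := by
        exact_mod_cast (c m).den_ne_zero
      field_simp at h1
      rw [mul_comm ((A*B : ℕ) : ℤ)]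
      exact_mod_cast h1
    have hpnum : (p:ℤ) ∣ (c m).num := by
      have h2 : (p:ℤ) ∣ (c m).num * ((144^m * D * m.factorial : ℕ) : ℤ) := by
        rw [hZ]
        exact Dvd.dvd.mul_right (Int.natCast_dvd_natCast.mpr hnum) _
      rcases (Nat.prime_iff_prime_int.mp hp).dvd_mul.mp h2 with h | h
      · exact h
      · exact absurd (Int.natCast_dvd_natCast.mp h) hden
    rw [Rat.cast_def]
    have : (((c m).num : ℤ) : ZMod p) = 0 :=
      (ZMod.intCast_zmod_eq_zero_iff_dvd _ _).mpr hpnum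
    rw [this, zero_div]
end

section
/- Let p be a prime with p ≡ 3 (mod 4), and let G_p(λ) = Σ_{m=0}^{(p+1)/4} ((−1/4)_m (1/4)_m)/((1/2)_m m!) λ^m, viewed as a polynomial over 𝔽_p (all its coefficients are p-integral). Then G_p is reciprocal modulo p: λ^{(p+1)/4} · G_p(1/λ) ≡ G_p(λ) (mod p), i.e. the coefficient of λ^j in G_p equals the coefficient of λ^{(p+1)/4 − j} for all 0 ≤ j ≤ (p+1)/4. -/
open Finset Nat

def oddProd (k : ℕ) : ℤ := ∏ i ∈ range k, (1 - 2 * (i : ℤ))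

def hypergeomCoeff (m : ℕ) : ℚ := poch (-1/4) m * poch (1/4) m / (poch (1/2) m * m !)

lemma poch_pos {x : ℚ} (hx : 0 < x) : ∀ m, 0 < poch x m
  | 0 => one_pos
  | m + 1 => mul_pos (poch_pos hx m) (by positivity)

lemma poch_neg_quarter_mul_poch_quarter (m : ℕ) :
    poch (-1/4) m * poch (1/4) m * (4 ^ m * (2 * m)!) =
      oddProd (2 * m) * (poch (1/2) m * m !) := by
  induction m with
  | zero => simp [poch, oddProd]
  | succ m ih =>
    simp only [oddProd, Nat.mul_succ, prod_range_succ, poch, factorial_succ] at ih ⊢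
    push_cast at ih ⊢
    linear_combination ((-1/4 + (m : ℚ)) * (1/4 + m) * 4 * ((2 * m + 1 + 1) * (2 * m + 1))) * ih

lemma hypergeomCoeff_mul_eq_oddProd (m : ℕ) :
    hypergeomCoeff m * ((4 ^ m * (2 * m)! : ℕ) : ℚ) = oddProd (2 * m) := by
  have hpos : 0 < poch (1/2) m * m ! := mul_pos (poch_pos (by norm_num) m) (by positivity)
  rw [hypergeomCoeff, div_mul_eq_mul_div, div_eq_iff hpos.ne',
    ← poch_neg_quarter_mul_poch_quarter]
  push_cast
  ring

lemma Rat.not_dvd_den_and_cast_mul_eq {p : ℕ} [Fact p.Prime] {q : ℚ} {a : ℤ} {b : ℕ}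
    (hb : ¬ p ∣ b) (h : q * b = a) : ¬ p ∣ q.den ∧ (q : ZMod p) * b = a := by
  have hb0 : (b : ℚ) ≠ 0 := by exact_mod_cast fun h0 : b = 0 ↦ hb (h0 ▸ dvd_zero p)
  rw [← eq_div_iff hb0] at h
  subst h
  have hbp : (b : ZMod p) ≠ 0 := by rwa [Ne, ZMod.natCast_eq_zero_iff]
  refine ⟨fun hp ↦ hb ?_, ?_⟩
  · have hden : (((a : ℚ) / b).den : ℤ) ∣ b := by
      rw [← Int.cast_natCast b, ← Rat.divInt_eq_div]
      exact Rat.den_dvd a b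
    exact Int.natCast_dvd_natCast.mp ((Int.natCast_dvd_natCast.mpr hp).trans hden)
  · rw [Rat.cast_div_of_ne_zero (by simp) (by simpa using hbp)]
    simp [div_mul_cancel₀ _ hbp]

lemma oddProd_cast_eq {R : Type*} [CommRing R] {n : R} (hn : 4 * n = 1) (k : ℕ) :
    (oddProd k : R) = 2 ^ k * (descPochhammer R k).eval (2 * n) := by
  rw [oddProd, descPochhammer_eval_eq_prod_range, pow_eq_prod_const, ← prod_mul_distrib]
  push_cast
  refine prod_congr rfl fun i _ ↦ ?_
  linear_combination -hn

lemma not_dvd_four_pow_mul_factorial {p m : ℕ} (hp : p.Prime) (hodd : Odd p) (hm : 2 * m < p) :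
    ¬ p ∣ 4 ^ m * (2 * m)! :=
  hp.coprime_iff_not_dvd.mp <|
    .mul_right (.pow_right m (.pow_right 2 hodd.coprime_two_right)) (hp.coprime_factorial_of_lt hm)

lemma hypergeomCoeff_cast_eq_choose {p N m : ℕ} [Fact p.Prime] (hpN : p + 1 = 4 * N)
    (hm : m ≤ N) :
    ¬ p ∣ (hypergeomCoeff m).den ∧ (hypergeomCoeff m : ZMod p) = (2 * N).choose (2 * m) := by
  have hb : ¬ p ∣ 4 ^ m * (2 * m)! :=
    not_dvd_four_pow_mul_factorial Fact.out ⟨2 * N - 1, by omega⟩ (by omega)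
  obtain ⟨hden, hcast⟩ := Rat.not_dvd_den_and_cast_mul_eq hb (hypergeomCoeff_mul_eq_oddProd m)
  refine ⟨hden, mul_right_cancel₀ (b := ((4 ^ m * (2 * m)! : ℕ) : ZMod p)) ?_ ?_⟩
  · rwa [Ne, ZMod.natCast_eq_zero_iff]
  have h4N : 4 * (N : ZMod p) = 1 := by
    have := congrArg (Nat.cast : ℕ → ZMod p) hpN
    push_cast [ZMod.natCast_self] at this
    linear_combination -this
  rw [hcast, oddProd_cast_eq h4N, ← Nat.cast_ofNat, ← Nat.cast_mul,
    descPochhammer_eval_eq_descFactorial, descFactorial_eq_factorial_mul_choose, pow_mul]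
  push_cast
  ring

/-- The polynomial `G_p` is reciprocal modulo `p`: for `p ≡ 3 (mod 4)` (i.e. `p + 1 = 4N`),
all coefficients of `G_p` are `p`-integral, and the coefficient of `λ^j` agrees with the
coefficient of `λ^{N − j}` modulo `p` for `0 ≤ j ≤ N`. -/
theorem stmt_5 (p N : ℕ) [Fact p.Prime] (hpN : p + 1 = 4 * N)
    (c : ℕ → ℚ)
    (hc : ∀ m, c m = poch (-1/4) m * poch (1/4) m / (poch (1/2) m * m.factorial)) :
    ∀ j ≤ N, ¬ (p ∣ (c j).den) ∧ ((c j : ZMod p) = ((c (N - j) : ℚ) : ZMod p)) := by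
  obtain rfl : c = hypergeomCoeff := funext hc
  intro j hj
  obtain ⟨hden, hcast⟩ := hypergeomCoeff_cast_eq_choose hpN hj
  refine ⟨hden, ?_⟩
  rw [hcast, (hypergeomCoeff_cast_eq_choose hpN (N.sub_le j)).2,
    show 2 * (N - j) = 2 * N - 2 * j by omega, choose_symm (by omega)]
end

section
/- For all integers v ≥ 0, the identity Σ_{j=0}^{v} [((−1/4)_j (1/4)_j)/((1/2)_j j!)] · [(1/2)_{v−j}/(v−j)!] = (1/2)_{2v}/(2v)! holds in ℚ. -/
set_option maxHeartbeats 2000000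

lemma poch_succ (x : ℚ) (m : ℕ) : poch x (m + 1) = poch x m * (x + m) := rfl

lemma poch_half_pos (n : ℕ) : 0 < poch (1/2) n := by
  induction n with
  | zero => norm_num [poch]
  | succ m ih =>
      rw [poch_succ]
      have : (0:ℚ) < 1/2 + m := by positivity
      positivity

lemma poch_half_ne (n : ℕ) : poch (1/2) n ≠ 0 := (poch_half_pos n).ne'

lemma fact_cast_ne (n : ℕ) : ((n.factorial : ℚ)) ≠ 0 := by
  exact_mod_cast n.factorial_ne_zero

/-- summand -/
def Fv (v j : ℕ) : ℚ :=
  (poch (-1/4) j * poch (1/4) j / (poch (1/2) j * j.factorial)) *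
    (poch (1/2) (v - j) / (v - j).factorial)

/-- certificate -/
def g (v j : ℕ) : ℚ :=
  4*j*(2*j-1)*(2*j-1-2*v) *
    (poch (-1/4) j * poch (1/4) j / (poch (1/2) j * j.factorial)) *
    (2 * poch (1/2) (v+1-j) / ((v+1-j).factorial * (2*(v:ℚ)-2*(j:ℚ)+1)))

lemma two_k_sub_one_ne (k : ℕ) : (2*(k:ℚ)-1) ≠ 0 := by
  rcases k with _ | k
  · norm_num
  · have hk : (0:ℚ) ≤ (k:ℚ) := k.cast_nonneg
    push_cast
    intro h
    linarith

lemma key (j k : ℕ) :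
    (4*((j:ℚ)+k)+2)*(4*((j:ℚ)+k)+4) * Fv (j+k+1) j
      - (4*((j:ℚ)+k)+1)*(4*((j:ℚ)+k)+3) * Fv (j+k) j
    = g (j+k) (j+1) - g (j+k) j := by
  have e1 : j + k - j = k := by omega
  have e2 : j + k + 1 - j = k + 1 := by omega
  have e3 : j + k + 1 - (j + 1) = k := by omega
  simp only [Fv, g, e1, e2, e3]
  rw [poch_succ (1/2) k, poch_succ (-1/4) j, poch_succ (1/4) j, poch_succ (1/2) j,
    Nat.factorial_succ k, Nat.factorial_succ j]
  have hpj := poch_half_ne j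
  have hfj := fact_cast_ne j
  have hfk := fact_cast_ne k
  have h1 : (2*(k:ℚ)+1) ≠ 0 := by positivity
  have h2 := two_k_sub_one_ne k
  have h3 : ((k:ℚ)+1) ≠ 0 := by positivity
  have h4 : ((j:ℚ)+1) ≠ 0 := by positivity
  have h5 : (1/2 + (j:ℚ)) ≠ 0 := by positivity
  have h1' : 2*((j:ℚ)+(k:ℚ))-2*(j:ℚ)+1 ≠ 0 := by intro h; exact h1 (by linarith)
  have h2' : 2*((j:ℚ)+(k:ℚ))-2*((j:ℚ)+1)+1 ≠ 0 := by intro h; exact h2 (by linarith)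
  push_cast
  obtain ⟨d, hd⟩ : ∃ d : ℚ, d = 2*(k:ℚ)-1 := ⟨_, rfl⟩
  have hd0 : d ≠ 0 := hd ▸ h2
  rw [show 2*((j:ℚ)+k)-2*j+1 = 2*k+1 by ring, show 2*((j:ℚ)+1)-1-2*((j:ℚ)+k) = -d by linarith,
    show 2*((j:ℚ)+k)-2*((j:ℚ)+1)+1 = d by linarith]
  field_simp
  ring

/-- Cauchy-product/Vandermonde identity:
`Σ_{j=0}^{v} [(−1/4)_j (1/4)_j]/[(1/2)_j j!] · (1/2)_{v−j}/(v−j)! = (1/2)_{2v}/(2v)!`. -/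
theorem stmt_9 (v : ℕ) :
    (∑ j ∈ Finset.range (v + 1),
        (poch (-1/4) j * poch (1/4) j / (poch (1/2) j * j.factorial)) *
          (poch (1/2) (v - j) / (v - j).factorial)) =
      poch (1/2) (2 * v) / (2 * v).factorial := by
  induction v with
  | zero => norm_num [poch]
  | succ v ih =>
      have hsum : ∀ w : ℕ, (∑ j ∈ Finset.range (w + 1),
          (poch (-1/4) j * poch (1/4) j / (poch (1/2) j * j.factorial)) *
            (poch (1/2) (w - j) / (w - j).factorial)) = ∑ j ∈ Finset.range (w+1), Fv w j := by
        intro w; rfl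
      rw [hsum]
      rw [hsum] at ih
      -- telescoping
      have tel : ∑ j ∈ Finset.range (v+1), (g v (j+1) - g v j) = g v (v+1) - g v 0 :=
        Finset.sum_range_sub (g v) (v+1)
      have keysum : ∑ j ∈ Finset.range (v+1),
          ((4*((v:ℚ))+2)*(4*((v:ℚ))+4) * Fv (v+1) j
            - (4*((v:ℚ))+1)*(4*((v:ℚ))+3) * Fv v j) = g v (v+1) - g v 0 := by
        rw [← tel]
        apply Finset.sum_congr rfl
        intro j hj
        have hjv : j ≤ v := Nat.lt_succ_iff.mp (Finset.mem_range.mp hj)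
        obtain ⟨k, rfl⟩ : ∃ k, v = j + k := ⟨v - j, by omega⟩
        have hk := key j k
        push_cast at hk ⊢
        linear_combination hk
      have hg0 : g v 0 = 0 := by simp [g]
      have hA1 : Fv (v+1) (v+1) =
          poch (-1/4) (v+1) * poch (1/4) (v+1) / (poch (1/2) (v+1) * (v+1).factorial) := by
        simp [Fv, poch]
      have hgtop : g v (v+1) = -8*((v:ℚ)+1)*(2*(v:ℚ)+1) *
          (poch (-1/4) (v+1) * poch (1/4) (v+1) / (poch (1/2) (v+1) * (v+1).factorial)) := by
        have e : v + 1 - (v + 1) = 0 := by omega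
        simp only [g, e, poch, Nat.factorial_zero]
        push_cast
        have h : (2*(v:ℚ)-2*((v:ℚ)+1)+1) = -1 := by ring
        rw [h]
        ring
      rw [Finset.sum_sub_distrib, ← Finset.mul_sum, ← Finset.mul_sum] at keysum
      rw [hg0, hgtop, sub_zero, ← hA1, ih] at keysum
      -- keysum : a * S1 - c * (P/F) = -8(v+1)(2v+1) * X
      rw [Finset.sum_range_succ]
      have hpoch : poch (1/2) (2*(v+1)) = poch (1/2) (2*v) * ((1/2 + 2*(v:ℚ)) * (1/2 + (2*(v:ℚ)+1))) := by
        have e : 2*(v+1) = (2*v+1)+1 := by omega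
        rw [e, poch_succ, poch_succ]
        push_cast
        ring
      have hfact : (((2*(v+1)).factorial : ℚ)) = ((2*(v:ℚ)+2)*(2*(v:ℚ)+1)) * ((2*v).factorial : ℚ) := by
        have e : 2*(v+1) = (2*v+1)+1 := by omega
        rw [e, Nat.factorial_succ, Nat.factorial_succ]
        push_cast
        ring
      rw [hpoch, hfact]
      have hF := fact_cast_ne (2*v)
      have hden : ((2*(v:ℚ)+2)*(2*(v:ℚ)+1)) * ((2*v).factorial : ℚ) ≠ 0 := by
        apply mul_ne_zero _ hF
        apply mul_ne_zero <;> positivity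
      rw [eq_div_iff hden]
      have hPF : poch (1/2) (2*v) / ((2*v).factorial : ℚ) * ((2*v).factorial : ℚ)
          = poch (1/2) (2*v) := div_mul_cancel₀ _ hF
      linear_combination ((((2*v).factorial : ℚ))/4) * keysum
        + ((4*(v:ℚ)+1)*(4*(v:ℚ)+3)/4) * hPF
end

section
/- Let p ≥ 7 be a prime with p ≡ 3 (mod 4) and let λ ∈ 𝔽_p \ {0, 1}. Consider the Legendre elliptic curve E_λ : Y² = X(X−1)(X−λ) over 𝔽_p. Then the group of 𝔽_p-rational 4-torsion points E_λ(𝔽_p)[4] is isomorphic to ℤ/2ℤ × ℤ/2ℤ if both −λ and λ − 1 are nonzero squares in 𝔽_p, and isomorphic to ℤ/2ℤ × ℤ/4ℤ otherwise. -/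
/-- The Legendre elliptic curve `Y² = X(X−1)(X−λ) = X³ − (1+λ)X² + λX`. -/
def Legendre (F : Type*) [CommRing F] (lam : F) : WeierstrassCurve.Affine F :=
  { a₁ := 0, a₂ := -(1 + lam), a₃ := 0, a₄ := lam, a₆ := 0 }

/-- The `4`-torsion subgroup `{P | 4 • P = 0}` of an additive commutative group. -/
def tors4 (A : Type*) [AddCommGroup A] : AddSubgroup A where
  carrier := {P | 4 • P = 0}
  zero_mem' := by simp
  add_mem' := by
    intro a b ha hb
    simp only [Set.mem_setOf_eq, smul_add] at *
    rw [ha, hb, add_zero]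
  neg_mem' := by
    intro a ha
    simp only [Set.mem_setOf_eq, smul_neg] at *
    rw [ha, neg_zero]

section Abstract

variable {G : Type*} [AddCommGroup G]

/-- Build a hom `ZMod n →+ H` from an element killed by `n`. -/
noncomputable def zmodHom {H : Type*} [AddCommGroup H] (n : ℕ) (a : H)
    (ha : ((n : ℕ) : ℤ) • a = 0) : ZMod n →+ H :=
  ZMod.lift n ⟨zmultiplesHom H a, ha⟩

lemma zmodHom_apply {H : Type*} [AddCommGroup H] (n : ℕ) (a : H)
    (ha : ((n : ℕ) : ℤ) • a = 0) (k : ℤ) :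
    zmodHom n a ha ((k : ℤ) : ZMod n) = k • a := by
  rw [zmodHom, ZMod.lift_coe]
  rfl

lemma iso22 (t u : G) (ht : t + t = 0) (hu : u + u = 0) (ht0 : t ≠ 0) (hu0 : u ≠ 0)
    (htu : t ≠ u)
    (hsurj : ∀ x : G, 4 • x = 0 → x = 0 ∨ x = t ∨ x = u ∨ x = t + u) :
    Nonempty (tors4 G ≃+ (ZMod 2 × ZMod 2)) := by
  have ht4 : (4 : ℕ) • t = 0 := by
    have h : (4 : ℕ) • t = (t + t) + (t + t) := by module
    rw [h, ht, add_zero]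
  have hu4 : (4 : ℕ) • u = 0 := by
    have h : (4 : ℕ) • u = (u + u) + (u + u) := by module
    rw [h, hu, add_zero]
  set T : tors4 G := ⟨t, ht4⟩ with hT
  set U : tors4 G := ⟨u, hu4⟩ with hU
  have hT2 : ((2 : ℕ) : ℤ) • T = 0 := by
    ext
    show ((2 : ℕ) : ℤ) • t = 0
    rw [show ((2:ℕ):ℤ) • t = t + t by module, ht]
  have hU2 : ((2 : ℕ) : ℤ) • U = 0 := by
    ext
    show ((2 : ℕ) : ℤ) • u = 0
    rw [show ((2:ℕ):ℤ) • u = u + u by module, hu]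
  set φ : ZMod 2 × ZMod 2 →+ tors4 G :=
    ((zmodHom 2 T hT2).comp (AddMonoidHom.fst _ _)) +
      ((zmodHom 2 U hU2).comp (AddMonoidHom.snd _ _)) with hφ
  have key : ∀ j k : ℤ, ((φ ((j : ZMod 2), (k : ZMod 2)) : tors4 G) : G) = j • t + k • u := by
    intro j k
    show ((zmodHom 2 T hT2 (j : ZMod 2) + zmodHom 2 U hU2 (k : ZMod 2) : tors4 G) : G) = _
    rw [zmodHom_apply, zmodHom_apply]
    rfl
  have hcases2 : ∀ a : ZMod 2, a = ((0 : ℤ) : ZMod 2) ∨ a = ((1 : ℤ) : ZMod 2) := by decide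
  have hinj : Function.Injective φ := by
    rw [injective_iff_map_eq_zero]
    rintro ⟨a, b⟩ hab
    rcases hcases2 a with rfl | rfl <;> rcases hcases2 b with rfl | rfl
    · rfl
    · exfalso
      have := congrArg (Subtype.val) hab
      rw [key] at this
      simp only [zero_zsmul, one_zsmul, zero_add] at this
      exact hu0 this
    · exfalso
      have := congrArg (Subtype.val) hab
      rw [key] at this
      simp only [zero_zsmul, one_zsmul, add_zero] at this
      exact ht0 this
    · exfalso
      have := congrArg (Subtype.val) hab
      rw [key] at this
      simp only [one_zsmul] at this
      have htu' : t = u := by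
        have h2 : -u = u := by
          rw [neg_eq_iff_add_eq_zero, hu]
        rw [← h2]
        exact eq_neg_of_add_eq_zero_left this
      exact htu htu'
  have hsurjφ : Function.Surjective φ := by
    rintro ⟨x, hx⟩
    rcases hsurj x hx with rfl | rfl | rfl | rfl
    · exact ⟨(((0:ℤ):ZMod 2), ((0:ℤ):ZMod 2)), Subtype.ext (by rw [key]; simp)⟩
    · exact ⟨(((1:ℤ):ZMod 2), ((0:ℤ):ZMod 2)), Subtype.ext (by rw [key]; simp)⟩
    · exact ⟨(((0:ℤ):ZMod 2), ((1:ℤ):ZMod 2)), Subtype.ext (by rw [key]; simp)⟩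
    · exact ⟨(((1:ℤ):ZMod 2), ((1:ℤ):ZMod 2)), Subtype.ext (by rw [key]; simp)⟩
  exact ⟨(AddEquiv.ofBijective φ ⟨hinj, hsurjφ⟩).symm⟩

lemma iso24 (t q : G) (ht : t + t = 0) (hq : (4 : ℕ) • q = 0) (ht0 : t ≠ 0)
    (hq2 : q + q ≠ 0) (htq : t ≠ q) (htq2 : t ≠ q + q) (htnq : t ≠ -q)
    (hsurj : ∀ x : G, 4 • x = 0 → x = 0 ∨ x = q ∨ x = q + q ∨ x = -q ∨
      x = t ∨ x = t + q ∨ x = t + (q + q) ∨ x = t + -q) :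
    Nonempty (tors4 G ≃+ (ZMod 2 × ZMod 4)) := by
  have ht4 : (4 : ℕ) • t = 0 := by
    have h : (4 : ℕ) • t = (t + t) + (t + t) := by module
    rw [h, ht, add_zero]
  set T : tors4 G := ⟨t, ht4⟩ with hT
  set Q : tors4 G := ⟨q, hq⟩ with hQ
  have hT2 : ((2 : ℕ) : ℤ) • T = 0 := by
    ext
    show ((2 : ℕ) : ℤ) • t = 0
    rw [show ((2:ℕ):ℤ) • t = t + t by module, ht]
  have hQ4 : ((4 : ℕ) : ℤ) • Q = 0 := by
    ext
    show ((4 : ℕ) : ℤ) • q = 0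
    rw [show ((4:ℕ):ℤ) • q = (4:ℕ) • q by exact natCast_zsmul q 4, hq]
  have hq4 : (4 : ℤ) • q = 0 := by
    rw [show (4:ℤ) • q = (4:ℕ) • q by exact natCast_zsmul q 4, hq]
  have h3q : (3 : ℤ) • q = -q := by
    rw [show (3:ℤ) • q = (4:ℤ) • q - q by module, hq4, zero_sub]
  have h2q : (2 : ℤ) • q = q + q := two_zsmul q
  have hqq : -(q + q) = q + q := by
    rw [neg_eq_iff_add_eq_zero, show q + q + (q + q) = (4:ℤ) • q by module, hq4]
  set φ : ZMod 2 × ZMod 4 →+ tors4 G :=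
    ((zmodHom 2 T hT2).comp (AddMonoidHom.fst _ _)) +
      ((zmodHom 4 Q hQ4).comp (AddMonoidHom.snd _ _)) with hφ
  have key : ∀ j k : ℤ, ((φ ((j : ZMod 2), (k : ZMod 4)) : tors4 G) : G) = j • t + k • q := by
    intro j k
    show ((zmodHom 2 T hT2 (j : ZMod 2) + zmodHom 4 Q hQ4 (k : ZMod 4) : tors4 G) : G) = _
    rw [zmodHom_apply, zmodHom_apply]
    rfl
  have hcases2 : ∀ a : ZMod 2, a = ((0 : ℤ) : ZMod 2) ∨ a = ((1 : ℤ) : ZMod 2) := by decide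
  have hcases4 : ∀ b : ZMod 4, b = ((0 : ℤ) : ZMod 4) ∨ b = ((1 : ℤ) : ZMod 4) ∨
      b = ((2 : ℤ) : ZMod 4) ∨ b = ((3 : ℤ) : ZMod 4) := by decide
  have hinj : Function.Injective φ := by
    rw [injective_iff_map_eq_zero]
    rintro ⟨a, b⟩ hab
    have hval := congrArg (Subtype.val) hab
    rcases hcases2 a with rfl | rfl <;>
      rcases hcases4 b with rfl | rfl | rfl | rfl <;>
      rw [key] at hval <;>
      simp only [zero_zsmul, one_zsmul, zero_add, add_zero, h3q, h2q,
        ZeroMemClass.coe_zero] at hval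
    · rfl
    · exact absurd (by rw [hval, add_zero] : q + q = 0) hq2
    · exact absurd hval hq2
    · have : q = 0 := neg_eq_zero.mp hval
      exact absurd (by rw [this, add_zero] : q + q = 0) hq2
    · exact absurd hval ht0
    · exact absurd (eq_neg_of_add_eq_zero_left hval) htnq
    · exact absurd ((eq_neg_of_add_eq_zero_left hval).trans hqq) htq2
    · exact absurd ((eq_neg_of_add_eq_zero_left hval).trans (neg_neg q)) htq
  have hsurjφ : Function.Surjective φ := by
    rintro ⟨x, hx⟩
    rcases hsurj x hx with rfl | rfl | rfl | rfl | rfl | rfl | rfl | rfl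
    · exact ⟨(((0:ℤ):ZMod 2), ((0:ℤ):ZMod 4)), Subtype.ext (by rw [key]; simp)⟩
    · exact ⟨(((0:ℤ):ZMod 2), ((1:ℤ):ZMod 4)), Subtype.ext (by rw [key]; simp)⟩
    · exact ⟨(((0:ℤ):ZMod 2), ((2:ℤ):ZMod 4)), Subtype.ext (by rw [key, h2q]; simp)⟩
    · exact ⟨(((0:ℤ):ZMod 2), ((3:ℤ):ZMod 4)), Subtype.ext (by rw [key, h3q]; simp)⟩
    · exact ⟨(((1:ℤ):ZMod 2), ((0:ℤ):ZMod 4)), Subtype.ext (by rw [key]; simp)⟩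
    · exact ⟨(((1:ℤ):ZMod 2), ((1:ℤ):ZMod 4)), Subtype.ext (by rw [key]; simp)⟩
    · exact ⟨(((1:ℤ):ZMod 2), ((2:ℤ):ZMod 4)), Subtype.ext (by rw [key, h2q]; simp)⟩
    · exact ⟨(((1:ℤ):ZMod 2), ((3:ℤ):ZMod 4)), Subtype.ext (by rw [key, h3q]; simp)⟩
  exact ⟨(AddEquiv.ofBijective φ ⟨hinj, hsurjφ⟩).symm⟩

end Abstract

namespace LegAux

open WeierstrassCurve WeierstrassCurve.Affine WeierstrassCurve.Affine.Point

variable {F : Type*} [Field F] {lam : F}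

@[simp] lemma a1 : (Legendre F lam).a₁ = 0 := rfl
@[simp] lemma a2 : (Legendre F lam).a₂ = -(1 + lam) := rfl
@[simp] lemma a3 : (Legendre F lam).a₃ = 0 := rfl
@[simp] lemma a4 : (Legendre F lam).a₄ = lam := rfl
@[simp] lemma a6 : (Legendre F lam).a₆ = 0 := rfl

lemma leg_equation_iff (x y : F) :
    (Legendre F lam).Equation x y ↔ y ^ 2 = x * (x - 1) * (x - lam) := by
  rw [WeierstrassCurve.Affine.equation_iff]
  simp only [a1, a2, a3, a4, a6]
  constructor <;> intro h <;> linear_combination h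

lemma leg_Δ : (Legendre F lam).Δ = 16 * lam ^ 2 * (1 - lam) ^ 2 := by
  simp only [WeierstrassCurve.Δ, WeierstrassCurve.b₂, WeierstrassCurve.b₄,
    WeierstrassCurve.b₆, WeierstrassCurve.b₈, a1, a2, a3, a4, a6]
  ring

lemma leg_ns (h2 : (2 : F) ≠ 0) (h0 : lam ≠ 0) (h1 : lam ≠ 1) {x y : F}
    (h : (Legendre F lam).Equation x y) : (Legendre F lam).Nonsingular x y := by
  have h16 : (16 : F) ≠ 0 := by
    have : (16 : F) = 2 ^ 4 := by norm_num
    rw [this]; exact pow_ne_zero _ h2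
  have hΔ : (Legendre F lam).Δ ≠ 0 := by
    rw [leg_Δ]
    exact mul_ne_zero (mul_ne_zero h16 (pow_ne_zero _ h0))
      (pow_ne_zero _ (sub_ne_zero_of_ne fun h => h1 h.symm))
  exact (WeierstrassCurve.Affine.equation_iff_nonsingular_of_Δ_ne_zero (W := Legendre F lam) hΔ).mp h

lemma leg_negY (x y : F) : (Legendre F lam).negY x y = -y := by
  simp [WeierstrassCurve.Affine.negY]

lemma some_eq_some_iff {W : WeierstrassCurve.Affine F} {x₁ y₁ x₂ y₂ : F}
    {h₁ : W.Nonsingular x₁ y₁} {h₂ : W.Nonsingular x₂ y₂} :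
    (Point.some _ _ h₁ = Point.some _ _ h₂) ↔ x₁ = x₂ ∧ y₁ = y₂ := by
  constructor
  · intro h
    injection h with hx hy
    exact ⟨hx, hy⟩
  · rintro ⟨rfl, rfl⟩
    rfl


section Curve

open WeierstrassCurve WeierstrassCurve.Affine WeierstrassCurve.Affine.Point

variable {F : Type*} [Field F] [DecidableEq F] {lam : F}

lemma nsq (h2 : (2 : F) ≠ 0) (h0 : lam ≠ 0) (h1 : lam ≠ 1) {x y : F}
    (h : y ^ 2 = x * (x - 1) * (x - lam)) : (Legendre F lam).Nonsingular x y :=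
  leg_ns h2 h0 h1 ((leg_equation_iff x y).mpr h)

lemma heq_of_ns {x y : F} (h : (Legendre F lam).Nonsingular x y) :
    y ^ 2 = x * (x - 1) * (x - lam) :=
  (leg_equation_iff x y).mp (((Legendre F lam).nonsingular_iff x y).mp h).1

lemma negY_ne (h2 : (2 : F) ≠ 0) {x y : F} (hy : y ≠ 0) :
    y ≠ (Legendre F lam).negY x y := by
  rw [leg_negY]
  intro hc
  apply hy
  have : (2 : F) * y = 0 := by linear_combination hc
  rcases mul_eq_zero.mp this with h | h
  · exact absurd h h2
  · exact h

lemma two_torsion (h2 : (2 : F) ≠ 0)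
    {ns0 : (Legendre F lam).Nonsingular 0 0} {ns1 : (Legendre F lam).Nonsingular 1 0}
    {nsL : (Legendre F lam).Nonsingular lam 0} (P : (Legendre F lam).Point) :
    P + P = 0 ↔ P = 0 ∨ P = .some _ _ ns0 ∨ P = .some _ _ ns1 ∨ P = .some _ _ nsL := by
  rcases P with _ | @⟨x, y, hns⟩
  · simp [Point.zero_def]
  · have heq : y ^ 2 = x * (x - 1) * (x - lam) := heq_of_ns hns
    by_cases hy : y = 0
    · subst hy
      constructor
      · intro _
        have hxx : x * (x - 1) * (x - lam) = 0 := by linear_combination -heq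
        rcases mul_eq_zero.mp hxx with h' | hxl
        · rcases mul_eq_zero.mp h' with hx0 | hx1
          · exact Or.inr (Or.inl (some_eq_some_iff.mpr ⟨hx0, rfl⟩))
          · exact Or.inr (Or.inr (Or.inl (some_eq_some_iff.mpr ⟨sub_eq_zero.mp hx1, rfl⟩)))
        · exact Or.inr (Or.inr (Or.inr (some_eq_some_iff.mpr ⟨sub_eq_zero.mp hxl, rfl⟩)))
      · intro _
        exact add_of_Y_eq rfl (by rw [leg_negY, _root_.neg_zero])
    · have hy' : y ≠ (Legendre F lam).negY x y := negY_ne h2 hy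
      constructor
      · intro hPP
        rw [add_self_of_Y_ne hy'] at hPP
        exact absurd hPP (some_ne_zero _)
      · rintro (h | h | h | h)
        · exact absurd h (some_ne_zero _)
        all_goals
          exact absurd (some_eq_some_iff.mp h).2 hy
end Curve

section Classify

open WeierstrassCurve WeierstrassCurve.Affine WeierstrassCurve.Affine.Point

variable {F : Type*} [Field F] [DecidableEq F] {lam : F}

lemma slope_self_mul (h2 : (2 : F) ≠ 0) {x y : F} (hy : y ≠ 0) :
    (Legendre F lam).slope x x y y * (2 * y) = 3 * x ^ 2 - 2 * (1 + lam) * x + lam := by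
  have hy' : y ≠ (Legendre F lam).negY x y := negY_ne h2 hy
  rw [slope_of_Y_ne rfl hy', leg_negY]
  simp only [a1, a2, a4]
  have hden : y - -y = 2 * y := by ring
  rw [hden, div_mul_cancel₀ _ (mul_ne_zero h2 hy)]
  ring

lemma addX_key (h2 : (2 : F) ≠ 0) {x y : F} (hy : y ≠ 0)
    (heq : y ^ 2 = x * (x - 1) * (x - lam)) :
    (Legendre F lam).addX x x ((Legendre F lam).slope x x y y) * (2 * y) ^ 2
      = (x ^ 2 - lam) ^ 2 := by
  have hl := slope_self_mul (lam := lam) h2 (x := x) hy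
  simp only [WeierstrassCurve.Affine.addX, a1, a2]
  linear_combination ((Legendre F lam).slope x x y y * (2 * y)
    + (3 * x ^ 2 - 2 * (1 + lam) * x + lam)) * hl + (4 * (1 + lam) - 8 * x) * heq

lemma classify (h2 : (2 : F) ≠ 0) (h0 : lam ≠ 0) (h1 : lam ≠ 1)
    (hsqneg : ∀ u v : F, v ≠ 0 → u ^ 2 ≠ -v ^ 2)
    {ns0 : (Legendre F lam).Nonsingular 0 0} {ns1 : (Legendre F lam).Nonsingular 1 0}
    {nsL : (Legendre F lam).Nonsingular lam 0} (P : (Legendre F lam).Point)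
    (hP : 4 • P = 0) :
    P = 0 ∨ P = .some _ _ ns0 ∨ P = .some _ _ ns1 ∨ P = .some _ _ nsL ∨
      ∃ (x y : F) (h : (Legendre F lam).Nonsingular x y), P = .some _ _ h ∧
        (x ^ 2 - 2 * x + lam = 0 ∨ x ^ 2 - 2 * lam * x + lam = 0) := by
  rcases P with _ | @⟨x, y, hns⟩
  · exact Or.inl rfl
  · have heq : y ^ 2 = x * (x - 1) * (x - lam) := heq_of_ns hns
    by_cases hy : y = 0
    · subst hy
      have h2t : Point.some _ _ hns + Point.some _ _ hns = 0 :=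
        add_of_Y_eq rfl (by rw [leg_negY, _root_.neg_zero])
      rcases (two_torsion (ns0 := ns0) (ns1 := ns1) (nsL := nsL) h2 _).mp h2t with h | h | h | h
      · exact Or.inl h
      · exact Or.inr (Or.inl h)
      · exact Or.inr (Or.inr (Or.inl h))
      · exact Or.inr (Or.inr (Or.inr (Or.inl h)))
    · have hy' : y ≠ (Legendre F lam).negY x y := negY_ne h2 hy
      rw [show (4 : ℕ) = 2 + 2 from rfl, add_nsmul, two_nsmul, add_self_of_Y_ne hy'] at hP
      have h2y : (2 * y) ^ 2 ≠ 0 := pow_ne_zero _ (mul_ne_zero h2 hy)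
      have key := addX_key h2 hy heq
      rcases (two_torsion (ns0 := ns0) (ns1 := ns1) (nsL := nsL) h2 _).mp hP with h | h | h | h
      · exact absurd h (some_ne_zero _)
      · -- addX = 0 : impossible
        exfalso
        have hx2 : (Legendre F lam).addX x x ((Legendre F lam).slope x x y y) = 0 :=
          (some_eq_some_iff.mp h).1
        have hxl : x ^ 2 = lam := by
          have hz : (x ^ 2 - lam) ^ 2 = 0 := by rw [← key, hx2, zero_mul]
          have := pow_eq_zero_iff (two_ne_zero) |>.mp hz
          linear_combination this
        have hx0 : x ≠ 0 := by
          intro hc; apply h0; rw [← hxl, hc]; ring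
        have hx1 : x ≠ 1 := by
          intro hc; apply h1; rw [← hxl, hc]; ring
        have hcontra : y ^ 2 = -(x * (x - 1)) ^ 2 := by
          linear_combination heq + (x * (x - 1)) * hxl
        exact hsqneg y (x * (x - 1)) (mul_ne_zero hx0 (sub_ne_zero.mpr hx1)) hcontra
      · -- addX = 1
        have hx2 : (Legendre F lam).addX x x ((Legendre F lam).slope x x y y) = 1 :=
          (some_eq_some_iff.mp h).1
        have hz : (x ^ 2 - 2 * x + lam) ^ 2 = 0 := by
          linear_combination -key + (2 * y) ^ 2 * hx2 + 4 * heq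
        exact Or.inr (Or.inr (Or.inr (Or.inr ⟨x, y, hns, rfl,
          Or.inl (pow_eq_zero_iff two_ne_zero |>.mp hz)⟩)))
      · -- addX = lam
        have hx2 : (Legendre F lam).addX x x ((Legendre F lam).slope x x y y) = lam :=
          (some_eq_some_iff.mp h).1
        have hz : (x ^ 2 - 2 * lam * x + lam) ^ 2 = 0 := by
          linear_combination -key + (2 * y) ^ 2 * hx2 + 4 * lam * heq
        exact Or.inr (Or.inr (Or.inr (Or.inr ⟨x, y, hns, rfl,
          Or.inr (pow_eq_zero_iff two_ne_zero |>.mp hz)⟩)))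

end Classify

section Lamhalf

open WeierstrassCurve WeierstrassCurve.Affine WeierstrassCurve.Affine.Point

variable {F : Type*} [Field F] [DecidableEq F] {lam : F}

lemma lamhalf (h2 : (2 : F) ≠ 0) (h0 : lam ≠ 0) (h1 : lam ≠ 1)
    (hnsL : ¬ IsSquare (lam - 1)) {x y : F}
    (heq : y ^ 2 = x * (x - 1) * (x - lam)) (hq : x ^ 2 - 2 * lam * x + lam = 0) :
    False := by
  have ht2 : (x - lam) ^ 2 = lam ^ 2 - lam := by linear_combination hq
  have ht0 : x - lam ≠ 0 := by
    intro h
    have h' : lam * (lam - 1) = 0 := by linear_combination -ht2 + (x - lam) * h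
    rcases mul_eq_zero.mp h' with h'' | h''
    · exact h0 h''
    · exact h1 (sub_eq_zero.mp h'')
  have h2x : 2 * x - 1 ≠ 0 := by
    intro hc
    have : (1 : F) = 0 := by linear_combination 4 * ht2 + (-2 * x + 4 * lam - 1) * hc
    exact one_ne_zero this
  have hy2 : y ^ 2 = (x - lam) ^ 2 * (2 * x - 1) := by
    linear_combination heq - (x - lam) * ht2
  apply hnsL
  refine ⟨y * (x - 1) / ((x - lam) * (2 * x - 1)), ?_⟩
  rw [div_mul_div_comm, eq_div_iff (mul_ne_zero (mul_ne_zero ht0 h2x) (mul_ne_zero ht0 h2x))]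
  linear_combination (-(x - 1) ^ 2) * hy2 - ((x - lam) ^ 2 * (2 * x - 1)) * hq

lemma add_T0_T1 (h2 : (2 : F) ≠ 0)
    {ns0 : (Legendre F lam).Nonsingular 0 0} {ns1 : (Legendre F lam).Nonsingular 1 0}
    {nsL : (Legendre F lam).Nonsingular lam 0} :
    (Point.some _ _ ns0) + (Point.some _ _ ns1) = Point.some _ _ nsL := by
  have hx : (0 : F) ≠ 1 := zero_ne_one
  rw [add_of_X_ne hx]
  have hslope : (Legendre F lam).slope 0 1 0 0 = 0 := by
    rw [slope_of_X_ne hx]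
    simp
  refine some_eq_some_iff.mpr ⟨?_, ?_⟩
  · simp only [WeierstrassCurve.Affine.addX, hslope, a1, a2]
    ring
  · simp only [WeierstrassCurve.Affine.addY, WeierstrassCurve.Affine.negAddY,
      WeierstrassCurve.Affine.negY, WeierstrassCurve.Affine.addX, hslope, a1, a2, a3]
    ring

lemma add_T0_TL (h2 : (2 : F) ≠ 0) (h0 : lam ≠ 0)
    {ns0 : (Legendre F lam).Nonsingular 0 0} {ns1 : (Legendre F lam).Nonsingular 1 0}
    {nsL : (Legendre F lam).Nonsingular lam 0} :
    (Point.some _ _ ns0) + (Point.some _ _ nsL) = Point.some _ _ ns1 := by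
  have hx : (0 : F) ≠ lam := fun h => h0 h.symm
  rw [add_of_X_ne hx]
  have hslope : (Legendre F lam).slope 0 lam 0 0 = 0 := by
    rw [slope_of_X_ne hx]
    simp
  refine some_eq_some_iff.mpr ⟨?_, ?_⟩
  · simp only [WeierstrassCurve.Affine.addX, hslope, a1, a2]
    ring
  · simp only [WeierstrassCurve.Affine.addY, WeierstrassCurve.Affine.negAddY,
      WeierstrassCurve.Affine.negY, WeierstrassCurve.Affine.addX, hslope, a1, a2, a3]
    ring

end Lamhalf

end LegAux


open WeierstrassCurve WeierstrassCurve.Affine WeierstrassCurve.Affine.Point LegAux in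
/-- For a prime `p ≥ 7` with `p ≡ 3 (mod 4)` and `λ ∈ 𝔽_p \ {0,1}`, the rational `4`-torsion
group of the Legendre curve `E_λ` is `ℤ/2 × ℤ/2` if `−λ` and `λ − 1` are both nonzero squares,
and `ℤ/2 × ℤ/4` otherwise. -/
theorem stmt_11 (p : ℕ) [Fact p.Prime] (hp : 7 ≤ p) (hp4 : p % 4 = 3)
    (lam : ZMod p) (h0 : lam ≠ 0) (h1 : lam ≠ 1) :
    ((-lam ≠ 0 ∧ IsSquare (-lam) ∧ lam - 1 ≠ 0 ∧ IsSquare (lam - 1)) →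
      Nonempty (tors4 (Legendre (ZMod p) lam).Point ≃+ (ZMod 2 × ZMod 2))) ∧
    (¬ (-lam ≠ 0 ∧ IsSquare (-lam) ∧ lam - 1 ≠ 0 ∧ IsSquare (lam - 1)) →
      Nonempty (tors4 (Legendre (ZMod p) lam).Point ≃+ (ZMod 2 × ZMod 4))) := by
  have hp2 : (2 : ZMod p) ≠ 0 := by
    intro h
    have h' : ((2 : ℕ) : ZMod p) = 0 := by exact_mod_cast h
    rw [CharP.cast_eq_zero_iff (ZMod p) p 2] at h'
    have := Nat.le_of_dvd (by norm_num) h'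
    omega
  have hm1 : ¬ IsSquare (-1 : ZMod p) := by
    intro h
    exact (ZMod.exists_sq_eq_neg_one_iff.mp h) hp4
  have hsqneg : ∀ u v : ZMod p, v ≠ 0 → u ^ 2 ≠ -v ^ 2 := by
    intro u v hv h
    apply hm1
    refine ⟨u * v⁻¹, ?_⟩
    field_simp
    linear_combination -h
  have hm0 : -lam ≠ 0 := neg_ne_zero.mpr h0
  have h1' : lam - 1 ≠ 0 := sub_ne_zero.mpr h1
  have h1'' : (1 : ZMod p) - lam ≠ 0 := sub_ne_zero.mpr fun h => h1 h.symm
  have hnonsq_mul : ∀ a b : ZMod p, a ≠ 0 → b ≠ 0 → ¬IsSquare a → ¬IsSquare b →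
      IsSquare (a * b) := by
    intro a b ha hb hna hnb
    have hqa := quadraticChar_neg_one_iff_not_isSquare.mpr hna
    have hqb := quadraticChar_neg_one_iff_not_isSquare.mpr hnb
    refine (quadraticChar_one_iff_isSquare (mul_ne_zero ha hb)).mp ?_
    rw [map_mul, hqa, hqb]
    norm_num
  -- the three 2-torsion points
  have ns0 : (Legendre (ZMod p) lam).Nonsingular 0 0 := nsq hp2 h0 h1 (by ring)
  have ns1 : (Legendre (ZMod p) lam).Nonsingular 1 0 := nsq hp2 h0 h1 (by ring)
  have nsL : (Legendre (ZMod p) lam).Nonsingular lam 0 := nsq hp2 h0 h1 (by ring)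
  have hT00 : (Point.some _ _ ns0) + (Point.some _ _ ns0) = 0 :=
    add_of_Y_eq rfl (by rw [leg_negY, _root_.neg_zero])
  have hT11 : (Point.some _ _ ns1) + (Point.some _ _ ns1) = 0 :=
    add_of_Y_eq rfl (by rw [leg_negY, _root_.neg_zero])
  have hTLL : (Point.some _ _ nsL) + (Point.some _ _ nsL) = 0 :=
    add_of_Y_eq rfl (by rw [leg_negY, _root_.neg_zero])
  constructor
  · -- Case A : (ℤ/2)²
    rintro ⟨-, ⟨s, hs⟩, -, ⟨t, ht⟩⟩
    have hs0 : s ≠ 0 := by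
      intro h; apply hm0; rw [hs, h]; ring
    have ht0 : t ≠ 0 := by
      intro h; apply h1'; rw [ht, h]; ring
    refine iso22 (Point.some _ _ ns1) (Point.some _ _ ns0) hT11 hT00 (some_ne_zero _)
      (some_ne_zero _) (fun h => one_ne_zero ((some_eq_some_iff.mp h).1)) ?_
    intro P hP
    have hadd : (Point.some _ _ ns1) + (Point.some _ _ ns0) = Point.some _ _ nsL := by
      rw [add_comm]; exact add_T0_T1 hp2
    rcases classify hp2 h0 h1 hsqneg (ns0 := ns0) (ns1 := ns1) (nsL := nsL) P hP with
      h | h | h | h | ⟨x, y, hns, rfl, hq | hq⟩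
    · exact Or.inl h
    · exact Or.inr (Or.inr (Or.inl h))
    · exact Or.inr (Or.inl h)
    · exact Or.inr (Or.inr (Or.inr (h.trans hadd.symm)))
    · exfalso
      exact hsqneg (x - 1) t ht0 (by linear_combination hq - ht)
    · exfalso
      exact hsqneg (x - lam) (s * t) (mul_ne_zero hs0 ht0)
        (by linear_combination hq + lam * ht - t ^ 2 * hs)
  · -- Case B : ℤ/2 × ℤ/4
    intro hB
    have hB' : ¬ IsSquare (-lam) ∨ ¬ IsSquare (lam - 1) := by
      by_contra hc
      push_neg at hc
      exact hB ⟨hm0, hc.1, h1', hc.2⟩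
    by_cases hsq : IsSquare ((1 : ZMod p) - lam)
    · -- b1 : 1 - lam = s²
      obtain ⟨s, hs⟩ := hsq
      have hl : lam = 1 - s * s := by linear_combination -hs
      subst hl
      have hs0 : s ≠ 0 := by
        intro h; apply h1; rw [h]; ring
      have hs1 : (1 : ZMod p) + s ≠ 0 := by
        intro h
        apply h0
        have hsm : s = -1 := by linear_combination h
        rw [hsm]; ring
      have hnsL2 : ¬ IsSquare ((1 - s * s : ZMod p) - 1) := by
        rintro ⟨t, ht⟩
        exact hsqneg t s hs0 (by linear_combination -ht)
      have nsQ : (Legendre (ZMod p) (1 - s * s)).Nonsingular (1 + s) (s * (1 + s)) :=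
        nsq hp2 h0 h1 (by ring)
      have nsR : (Legendre (ZMod p) (1 - s * s)).Nonsingular (1 - s) (-(s * (1 - s))) :=
        nsq hp2 h0 h1 (by ring)
      have hyQ : s * (1 + s) ≠ 0 := mul_ne_zero hs0 hs1
      have hy' : s * (1 + s) ≠ (Legendre (ZMod p) (1 - s * s)).negY (1 + s) (s * (1 + s)) :=
        negY_ne hp2 hyQ
      have hsl : (Legendre (ZMod p) (1 - s * s)).slope (1 + s) (1 + s) (s * (1 + s)) (s * (1 + s))
          = 1 + s := by
        have hmul := slope_self_mul (lam := 1 - s * s) hp2 (x := 1 + s) hyQ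
        have h2y : (2 * (s * (1 + s))) ≠ 0 := mul_ne_zero hp2 hyQ
        apply mul_right_cancel₀ h2y
        rw [hmul]; ring
      have hQQ : Point.some _ _ nsQ + Point.some _ _ nsQ = Point.some _ _ ns1 := by
        rw [add_self_of_Y_ne hy']
        refine some_eq_some_iff.mpr ⟨?_, ?_⟩
        · simp only [WeierstrassCurve.Affine.addX, a1, a2, hsl]; ring
        · simp only [WeierstrassCurve.Affine.addY, WeierstrassCurve.Affine.negAddY,
            WeierstrassCurve.Affine.negY, WeierstrassCurve.Affine.addX, a1, a2, a3, hsl]; ring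
      have hx0Q : (0 : ZMod p) ≠ 1 + s := fun h => hs1 h.symm
      have hslR : (Legendre (ZMod p) (1 - s * s)).slope 0 (1 + s) 0 (s * (1 + s)) = s := by
        rw [slope_of_X_ne hx0Q, div_eq_iff (sub_ne_zero.mpr hx0Q)]; ring
      have hR : Point.some _ _ ns0 + Point.some _ _ nsQ = Point.some _ _ nsR := by
        rw [add_of_X_ne hx0Q]
        refine some_eq_some_iff.mpr ⟨?_, ?_⟩
        · simp only [WeierstrassCurve.Affine.addX, a1, a2, hslR]; ring
        · simp only [WeierstrassCurve.Affine.addY, WeierstrassCurve.Affine.negAddY,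
            WeierstrassCurve.Affine.negY, WeierstrassCurve.Affine.addX, a1, a2, a3, hslR]; ring
      have h4Q : (4 : ℕ) • (Point.some _ _ nsQ) = 0 := by
        rw [show (4 : ℕ) = 2 + 2 from rfl, add_nsmul, two_nsmul, hQQ, hT11]
      refine iso24 (Point.some _ _ ns0) (Point.some _ _ nsQ) hT00 h4Q (some_ne_zero _)
        (by rw [hQQ]; exact some_ne_zero _)
        (fun h => hx0Q ((some_eq_some_iff.mp h).1))
        (by rw [hQQ]; exact fun h => zero_ne_one ((some_eq_some_iff.mp h).1))
        (by rw [neg_some]; exact fun h => hx0Q ((some_eq_some_iff.mp h).1))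
        ?_
      intro P hP
      rcases classify hp2 h0 h1 hsqneg (ns0 := ns0) (ns1 := ns1) (nsL := nsL) P hP with
        h | h | h | h | ⟨x, y, hns, rfl, hq | hq⟩
      · exact Or.inl h
      · exact Or.inr (Or.inr (Or.inr (Or.inr (Or.inl h))))
      · exact Or.inr (Or.inr (Or.inl (h.trans hQQ.symm)))
      · refine Or.inr (Or.inr (Or.inr (Or.inr (Or.inr (Or.inr (Or.inl ?_))))))
        have hTL : Point.some _ _ ns0 + (Point.some _ _ nsQ + Point.some _ _ nsQ) = Point.some _ _ nsL := by
          rw [hQQ]; exact add_T0_T1 hp2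
        exact h.trans hTL.symm
      · have heq := heq_of_ns hns
        have hroot : (x - (1 + s)) * (x - (1 - s)) = 0 := by linear_combination hq
        rcases mul_eq_zero.mp hroot with hx | hx
        · have hxe : x = 1 + s := sub_eq_zero.mp hx
          subst hxe
          have hyy : (y - s * (1 + s)) * (y + s * (1 + s)) = 0 := by linear_combination heq
          rcases mul_eq_zero.mp hyy with hy | hy
          · exact Or.inr (Or.inl (some_eq_some_iff.mpr ⟨rfl, sub_eq_zero.mp hy⟩))
          · refine Or.inr (Or.inr (Or.inr (Or.inl ?_)))
            rw [neg_some]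
            refine some_eq_some_iff.mpr ⟨rfl, ?_⟩
            rw [leg_negY]; linear_combination hy
        · have hxe : x = 1 - s := sub_eq_zero.mp hx
          subst hxe
          have hyy : (y - (-(s * (1 - s)))) * (y + (-(s * (1 - s)))) = 0 := by
            linear_combination heq
          rcases mul_eq_zero.mp hyy with hy | hy
          · refine Or.inr (Or.inr (Or.inr (Or.inr (Or.inr (Or.inl ?_)))))
            exact (some_eq_some_iff.mpr ⟨rfl, sub_eq_zero.mp hy⟩).trans hR.symm
          · refine Or.inr (Or.inr (Or.inr (Or.inr (Or.inr (Or.inr (Or.inr ?_))))))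
            have hnegT0 : -(Point.some _ _ ns0) = Point.some _ _ ns0 := neg_eq_of_add_eq_zero_left hT00
            have hnegR : -(Point.some _ _ ns0 + Point.some _ _ nsQ)
                = Point.some _ _ ns0 + -(Point.some _ _ nsQ) := by
              rw [neg_add, hnegT0]
            rw [← hnegR, hR, neg_some]
            refine some_eq_some_iff.mpr ⟨rfl, ?_⟩
            rw [leg_negY]; linear_combination hy
      · exact (lamhalf hp2 h0 h1 hnsL2 (heq_of_ns hns) hq).elim
    · -- b2 : lam = a², lam - 1 = b²
      have hsqL : IsSquare (lam - 1) := by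
        have := hnonsq_mul (-1) (1 - lam) (by norm_num) h1''
          hm1 hsq
        rwa [show (-1 : ZMod p) * (1 - lam) = lam - 1 by ring] at this
      have hsqlam : IsSquare lam := by
        rcases hB' with hx | hx
        · have := hnonsq_mul (-1) (-lam) (by norm_num) hm0 hm1 hx
          rwa [show (-1 : ZMod p) * -lam = lam by ring] at this
        · exact absurd hsqL hx
      obtain ⟨a, ha⟩ := hsqlam
      obtain ⟨b, hb'⟩ := hsqL
      subst ha
      have hb : b * b = a * a - 1 := by linear_combination -hb'
      have ha0 : a ≠ 0 := by
        intro h; apply h0; rw [h]; ring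
      have hb0 : b ≠ 0 := by
        intro h; apply h1; linear_combination hb' + b * h
      have hapb : a + b ≠ 0 := by
        intro h
        have : (1 : ZMod p) = 0 := by linear_combination hb - (b - a) * h
        exact one_ne_zero this
      have hamb : a - b ≠ 0 := by
        intro h
        have : (1 : ZMod p) = 0 := by linear_combination hb + (b + a) * h
        exact one_ne_zero this
      have hxQ : a * a + a * b ≠ 0 := by
        intro h
        exact mul_ne_zero ha0 hapb (by linear_combination h)
      have hyQ : a * b * (a + b) ≠ 0 := mul_ne_zero (mul_ne_zero ha0 hb0) hapb
      have nsQ : (Legendre (ZMod p) (a * a)).Nonsingular (a * a + a * b) (a * b * (a + b)) :=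
        nsq hp2 h0 h1 (by linear_combination (a ^ 2 * b ^ 2 + a ^ 3 * b) * hb)
      have nsR : (Legendre (ZMod p) (a * a)).Nonsingular (a * a - a * b) (-(a * b * (a - b))) :=
        nsq hp2 h0 h1 (by linear_combination (a ^ 2 * b ^ 2 - a ^ 3 * b) * hb)
      have hy' : a * b * (a + b) ≠
          (Legendre (ZMod p) (a * a)).negY (a * a + a * b) (a * b * (a + b)) :=
        negY_ne hp2 hyQ
      have hsl : (Legendre (ZMod p) (a * a)).slope (a * a + a * b) (a * a + a * b)
          (a * b * (a + b)) (a * b * (a + b)) = a + b := by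
        have hmul := slope_self_mul (lam := a * a) hp2 (x := a * a + a * b) hyQ
        have h2y : (2 * (a * b * (a + b))) ≠ 0 := mul_ne_zero hp2 hyQ
        apply mul_right_cancel₀ h2y
        rw [hmul]; linear_combination (-2 * a * b - a ^ 2) * hb
      have hQQ : Point.some _ _ nsQ + Point.some _ _ nsQ = Point.some _ _ nsL := by
        rw [add_self_of_Y_ne hy']
        refine some_eq_some_iff.mpr ⟨?_, ?_⟩
        · simp only [WeierstrassCurve.Affine.addX, a1, a2, hsl]; linear_combination hb
        · simp only [WeierstrassCurve.Affine.addY, WeierstrassCurve.Affine.negAddY,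
            WeierstrassCurve.Affine.negY, WeierstrassCurve.Affine.addX, a1, a2, a3, hsl]
          linear_combination -(a + b) * hb
      have hx0Q : (0 : ZMod p) ≠ a * a + a * b := fun h => hxQ h.symm
      have hslR : (Legendre (ZMod p) (a * a)).slope 0 (a * a + a * b) 0 (a * b * (a + b))
          = b := by
        rw [slope_of_X_ne hx0Q, div_eq_iff (sub_ne_zero.mpr hx0Q)]; ring
      have hR : Point.some _ _ ns0 + Point.some _ _ nsQ = Point.some _ _ nsR := by
        rw [add_of_X_ne hx0Q]
        refine some_eq_some_iff.mpr ⟨?_, ?_⟩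
        · simp only [WeierstrassCurve.Affine.addX, a1, a2, hslR]; linear_combination hb
        · simp only [WeierstrassCurve.Affine.addY, WeierstrassCurve.Affine.negAddY,
            WeierstrassCurve.Affine.negY, WeierstrassCurve.Affine.addX, a1, a2, a3, hslR]
          linear_combination -b * hb
      have h4Q : (4 : ℕ) • (Point.some _ _ nsQ) = 0 := by
        rw [show (4 : ℕ) = 2 + 2 from rfl, add_nsmul, two_nsmul, hQQ, hTLL]
      refine iso24 (Point.some _ _ ns0) (Point.some _ _ nsQ) hT00 h4Q (some_ne_zero _)
        (by rw [hQQ]; exact some_ne_zero _)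
        (fun h => hx0Q ((some_eq_some_iff.mp h).1))
        (by rw [hQQ]; exact fun h => h0 ((some_eq_some_iff.mp h).1).symm)
        (by rw [neg_some]; exact fun h => hx0Q ((some_eq_some_iff.mp h).1))
        ?_
      intro P hP
      rcases classify hp2 h0 h1 hsqneg (ns0 := ns0) (ns1 := ns1) (nsL := nsL) P hP with
        h | h | h | h | ⟨x, y, hns, rfl, hq | hq⟩
      · exact Or.inl h
      · exact Or.inr (Or.inr (Or.inr (Or.inr (Or.inl h))))
      · refine Or.inr (Or.inr (Or.inr (Or.inr (Or.inr (Or.inr (Or.inl ?_))))))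
        have hT1 : Point.some _ _ ns0 + (Point.some _ _ nsQ + Point.some _ _ nsQ) = Point.some _ _ ns1 := by
          rw [hQQ]; exact add_T0_TL hp2 h0
        exact h.trans hT1.symm
      · exact Or.inr (Or.inr (Or.inl (h.trans hQQ.symm)))
      · exact absurd (⟨x - 1, by linear_combination -hq⟩ : IsSquare ((1 : ZMod p) - a * a)) hsq
      · have heq := heq_of_ns hns
        have hroot : (x - (a * a + a * b)) * (x - (a * a - a * b)) = 0 := by
          linear_combination hq - a ^ 2 * hb
        rcases mul_eq_zero.mp hroot with hx | hx
        · have hxe : x = a * a + a * b := sub_eq_zero.mp hx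
          subst hxe
          have hyy : (y - a * b * (a + b)) * (y + a * b * (a + b)) = 0 := by
            linear_combination heq - (a ^ 2 * b ^ 2 + a ^ 3 * b) * hb
          rcases mul_eq_zero.mp hyy with hy | hy
          · exact Or.inr (Or.inl (some_eq_some_iff.mpr ⟨rfl, sub_eq_zero.mp hy⟩))
          · refine Or.inr (Or.inr (Or.inr (Or.inl ?_)))
            rw [neg_some]
            refine some_eq_some_iff.mpr ⟨rfl, ?_⟩
            rw [leg_negY]; linear_combination hy
        · have hxe : x = a * a - a * b := sub_eq_zero.mp hx
          subst hxe
          have hyy : (y - (-(a * b * (a - b)))) * (y + (-(a * b * (a - b)))) = 0 := by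
            linear_combination heq - (a ^ 2 * b ^ 2 - a ^ 3 * b) * hb
          rcases mul_eq_zero.mp hyy with hy | hy
          · refine Or.inr (Or.inr (Or.inr (Or.inr (Or.inr (Or.inl ?_)))))
            exact (some_eq_some_iff.mpr ⟨rfl, sub_eq_zero.mp hy⟩).trans hR.symm
          · refine Or.inr (Or.inr (Or.inr (Or.inr (Or.inr (Or.inr (Or.inr ?_))))))
            have hnegT0 : -(Point.some _ _ ns0) = Point.some _ _ ns0 := neg_eq_of_add_eq_zero_left hT00
            have hnegR : -(Point.some _ _ ns0 + Point.some _ _ nsQ)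
                = Point.some _ _ ns0 + -(Point.some _ _ nsQ) := by
              rw [neg_add, hnegT0]
            rw [← hnegR, hR, neg_some]
            refine some_eq_some_iff.mpr ⟨rfl, ?_⟩
            rw [leg_negY]; linear_combination hy
end

section
/- Let p ≥ 7 be a prime with p ≡ 3 (mod 4), and for v ≥ 0 define S_v = Σ_{a=1}^{p−1} (1 − a^{(p−1)/2})(1 + (a−1)^{(p−1)/2}) a^v / 4 in 𝔽_p (the division by 4 is in 𝔽_p). Then for 1 ≤ v ≤ (p−3)/2, S_v = ((−1)^v/4)·C((p−1)/2, v) in 𝔽_p, where C denotes the binomial coefficient. -/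
open Finset

lemma key_sum (p : ℕ) [Fact p.Prime] (r : ℕ) :
    ∑ a ∈ Finset.Icc 1 (p - 1), (a : ZMod p) ^ r
      = if (p - 1) ∣ r then (-1 : ZMod p) else 0 := by
  classical
  have hp1 : 1 < p := (Fact.out : p.Prime).one_lt
  have h1 : ∑ a ∈ Finset.Icc 1 (p - 1), (a : ZMod p) ^ r
      = ∑ x ∈ (Finset.univ \ {0} : Finset (ZMod p)), x ^ r := by
    refine Finset.sum_nbij' (fun a => (a : ZMod p)) (fun x => x.val) ?_ ?_ ?_ ?_ ?_
    · intro a ha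
      simp only [Finset.mem_Icc] at ha
      simp only [Finset.mem_sdiff, Finset.mem_univ, Finset.mem_singleton, true_and]
      intro h0
      rw [ZMod.natCast_eq_zero_iff] at h0
      have hd := h0
      have := Nat.le_of_dvd (by omega) hd
      omega
    · intro x hx
      simp only [Finset.mem_sdiff, Finset.mem_univ, Finset.mem_singleton, true_and] at hx
      simp only [Finset.mem_Icc]
      have h2 := ZMod.val_lt x
      have h3 : x.val ≠ 0 := by
        intro h; exact hx (by rwa [← ZMod.val_eq_zero])
      omega
    · intro a ha
      simp only [Finset.mem_Icc] at ha
      exact ZMod.val_cast_of_lt (by omega)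
    · intro x hx
      exact ZMod.natCast_zmod_val x
    · intro a _; rfl
  rw [h1]
  have hcard : Fintype.card (ZMod p) = p := ZMod.card p
  let φ : (ZMod p)ˣ ↪ ZMod p := ⟨fun x ↦ x, Units.val_injective⟩
  have hmap : Finset.univ.map φ = Finset.univ \ {0} := by
    ext x
    simpa only [Finset.mem_map, Finset.mem_univ, Function.Embedding.coeFn_mk, true_and,
      Finset.mem_sdiff, Finset.mem_singleton, φ, IsUnit] using isUnit_iff_ne_zero
  rw [← hmap, Finset.sum_map]
  have := FiniteField.sum_pow_units (ZMod p) r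
  rw [hcard] at this
  rw [← this]
  refine Finset.sum_congr rfl fun x _ => ?_
  simp [φ]

lemma key_mul (p : ℕ) [Fact p.Prime] (h w : ℕ) :
    ∑ a ∈ Finset.Icc 1 (p - 1), ((a : ZMod p) - 1) ^ h * (a : ZMod p) ^ w
      = ∑ m ∈ Finset.range (h + 1),
          (-1 : ZMod p) ^ (m + h) * (h.choose m : ZMod p) *
            (if (p - 1) ∣ (m + w) then (-1 : ZMod p) else 0) := by
  classical
  calc ∑ a ∈ Finset.Icc 1 (p - 1), ((a : ZMod p) - 1) ^ h * (a : ZMod p) ^ w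
      = ∑ a ∈ Finset.Icc 1 (p - 1), ∑ m ∈ Finset.range (h + 1),
          (-1 : ZMod p) ^ (m + h) * (h.choose m : ZMod p) * (a : ZMod p) ^ (m + w) := by
        refine Finset.sum_congr rfl fun a _ => ?_
        rw [sub_pow, Finset.sum_mul]
        refine Finset.sum_congr rfl fun m _ => ?_
        rw [one_pow, pow_add]; ring
    _ = ∑ m ∈ Finset.range (h + 1), ∑ a ∈ Finset.Icc 1 (p - 1),
          (-1 : ZMod p) ^ (m + h) * (h.choose m : ZMod p) * (a : ZMod p) ^ (m + w) :=
        Finset.sum_comm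
    _ = _ := by
        refine Finset.sum_congr rfl fun m _ => ?_
        rw [← Finset.mul_sum, key_sum]

/-- For a prime `p ≥ 7` with `p ≡ 3 (mod 4)` and
`S_v = (1/4)·Σ_{a=1}^{p−1} (1 − a^{(p−1)/2})(1 + (a−1)^{(p−1)/2}) a^v` in `𝔽_p`, we have
`S_v = ((−1)^v/4)·C((p−1)/2, v)` for `1 ≤ v ≤ (p−3)/2`. -/
theorem stmt_19 (p : ℕ) [Fact p.Prime] (hp : 7 ≤ p) (hp4 : p % 4 = 3)
    (v : ℕ) (hv1 : 1 ≤ v) (hv2 : v ≤ (p - 3) / 2) :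
    (∑ a ∈ Finset.Icc 1 (p - 1),
        (1 - (a : ZMod p) ^ ((p - 1) / 2)) * (1 + ((a : ZMod p) - 1) ^ ((p - 1) / 2)) *
          (a : ZMod p) ^ v) / 4 =
      ((-1) ^ v / 4) * (((p - 1) / 2).choose v : ZMod p) := by
  classical
  set h : ℕ := (p - 1) / 2 with hh
  have h2h : 2 * h = p - 1 := by omega
  have hvh : v < h := by omega
  -- expand summand
  have hexp : ∑ a ∈ Finset.Icc 1 (p - 1),
        (1 - (a : ZMod p) ^ h) * (1 + ((a : ZMod p) - 1) ^ h) * (a : ZMod p) ^ v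
      = ((∑ a ∈ Finset.Icc 1 (p - 1), (a : ZMod p) ^ v)
          - (∑ a ∈ Finset.Icc 1 (p - 1), (a : ZMod p) ^ (h + v)))
        + ((∑ a ∈ Finset.Icc 1 (p - 1), ((a : ZMod p) - 1) ^ h * (a : ZMod p) ^ v)
          - (∑ a ∈ Finset.Icc 1 (p - 1), ((a : ZMod p) - 1) ^ h * (a : ZMod p) ^ (h + v))) := by
    rw [← Finset.sum_sub_distrib, ← Finset.sum_sub_distrib, ← Finset.sum_add_distrib]
    refine Finset.sum_congr rfl fun a _ => ?_
    rw [pow_add]; ring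
  have hS1 : ∑ a ∈ Finset.Icc 1 (p - 1), (a : ZMod p) ^ v = 0 := by
    rw [key_sum, if_neg]
    intro hd
    have := Nat.le_of_dvd (by omega) hd
    omega
  have hS2 : ∑ a ∈ Finset.Icc 1 (p - 1), (a : ZMod p) ^ (h + v) = 0 := by
    rw [key_sum, if_neg]
    intro hd
    have := Nat.le_of_dvd (by omega) hd
    omega
  have hS3 : ∑ a ∈ Finset.Icc 1 (p - 1), ((a : ZMod p) - 1) ^ h * (a : ZMod p) ^ v = 0 := by
    rw [key_mul]
    refine Finset.sum_eq_zero fun m hm => ?_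
    rw [Finset.mem_range] at hm
    rw [if_neg, mul_zero]
    intro hd
    have := Nat.le_of_dvd (by omega) hd
    omega
  have hS4 : ∑ a ∈ Finset.Icc 1 (p - 1), ((a : ZMod p) - 1) ^ h * (a : ZMod p) ^ (h + v)
      = -((-1 : ZMod p) ^ v * (h.choose v : ZMod p)) := by
    rw [key_mul]
    rw [Finset.sum_eq_single (h - v)]
    · rw [if_pos (by exact ⟨1, by omega⟩)]
      have hc : h.choose (h - v) = h.choose v := Nat.choose_symm (by omega)
      have hsign : (-1 : ZMod p) ^ (h - v + h) = (-1 : ZMod p) ^ v := by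
        have hcongr : h - v + h = v + 2 * (h - v) := by omega
        rw [hcongr, pow_add, pow_mul, neg_one_sq, one_pow, mul_one]
      rw [hc, hsign]; ring
    · intro m hm hne
      rw [Finset.mem_range] at hm
      rw [if_neg, mul_zero]
      intro hd
      have h1 := Nat.le_of_dvd (by omega) hd
      have h2 : m + (h + v) < 2 * (p - 1) := by omega
      have h3 : m + (h + v) = p - 1 := by
        obtain ⟨k, hk⟩ := hd
        have hklt : k < 2 := by
          by_contra hc
          push_neg at hc
          have := Nat.mul_le_mul_left (p - 1) hc
          omega
        interval_cases k <;> omega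
      omega
    · intro habs
      exact absurd (Finset.mem_range.mpr (by omega)) habs
  rw [hexp, hS1, hS2, hS3, hS4]
  rw [div_mul_eq_mul_div]
  congr 1
  ring
end
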